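/- For every tree T, the minimum skew rank equals twice the matching number: mr^-(T) = 2·match(T), and hence mr^-(T) = MR^-(T). -/

import Mathlib

open Matrix SimpleGraph

attribute [local instance] Classical.propDecidable

/-- The set of real skew-symmetric matrices whose off-diagonal zero-nonzero
pattern is described by the graph `G`. -/
def IsSkewRep {V : Type*} [Fintype V] (G : SimpleGraph V) (A : Matrix V V ℝ) : Prop :=
  Aᵀ = -A ∧ ∀ i j, i ≠ j → (A i j ≠ 0 ↔ G.Adj i j)

/-- The minimum skew rank of a simple graph. -/
noncomputable def minSkewRank {V : Type*} [Fintype V] (G : SimpleGraph V) : ℕ :=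
  sInf {r | ∃ A : Matrix V V ℝ, IsSkewRep G A ∧ A.rank = r}

/-- The maximum skew rank of a simple graph. -/
noncomputable def maxSkewRank {V : Type*} [Fintype V] (G : SimpleGraph V) : ℕ :=
  sSup {r | ∃ A : Matrix V V ℝ, IsSkewRep G A ∧ A.rank = r}

/-- The matching number of a simple graph. -/
noncomputable def matchNum {V : Type*} [Fintype V] (G : SimpleGraph V) : ℕ :=
  sSup {n | ∃ M : G.Subgraph, M.IsMatching ∧ M.edgeSet.ncard = n}

/-!
Every skew-symmetric matrix `A` with the pattern of a forest has rank `2 · match`, whatever its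
nonzero entries. If `u` is a leaf with neighbour `v`, then row and column `u` of `A` are zero
except at `v`, so a Schur complement on the invertible `2 × 2` block at `{u, v}` gives
`rank A = 2 + rank A[V ∖ {u, v}]`. On the matching side, deleting `v` and its partner from a
maximum matching loses at most one edge, and the pendant edge `uv` extends every matching avoiding
`u` and `v`, so `match T = 1 + match (T - u - v)`. Induction on the number of vertices then shows
that all skew representations of `T` have the same rank `2 · match T`.
-/

theorem Submodule.finrank_prod {K M M' : Type*} [DivisionRing K] [AddCommGroup M] [Module K M]
    [AddCommGroup M'] [Module K M'] [FiniteDimensional K M] [FiniteDimensional K M']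
    (p : Submodule K M) (q : Submodule K M') :
    Module.finrank K (p.prod q) = Module.finrank K p + Module.finrank K q := by
  have hinj : Function.Injective (p.subtype.prodMap q.subtype) :=
    Prod.map_injective.2 ⟨p.injective_subtype, q.injective_subtype⟩
  rw [← Module.finrank_prod, ← LinearMap.finrank_range_of_inj hinj, LinearMap.range_prodMap,
    Submodule.range_subtype, Submodule.range_subtype]

theorem Matrix.rank_fromBlocks_zero_zero {K m n p q : Type*} [Field K] [Fintype m] [Fintype n]
    [Fintype p] [Fintype q] (A : Matrix m n K) (D : Matrix p q K) :
    (fromBlocks A 0 0 D).rank = A.rank + D.rank := by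
  let eₙ := LinearEquiv.sumArrowLequivProdArrow n q K K
  let eₘ := LinearEquiv.sumArrowLequivProdArrow m p K K
  have hconj : (fromBlocks A 0 0 D).mulVecLin =
      eₘ.symm.toLinearMap ∘ₗ A.mulVecLin.prodMap D.mulVecLin ∘ₗ eₙ.toLinearMap := by
    refine LinearMap.ext fun x ↦ funext fun i ↦ ?_
    cases i <;> simp [eₘ, eₙ, fromBlocks_mulVec, LinearEquiv.sumArrowLequivProdArrow] <;> rfl
  rw [rank, hconj, LinearMap.range_comp, LinearMap.range_comp, LinearEquiv.range,
    Submodule.map_top, LinearEquiv.finrank_map_eq, LinearMap.range_prodMap,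
    Submodule.finrank_prod, rank, rank]

theorem Function.bijective_sumElim_pair_compl {V : Type*} {u v : V} (huv : u ≠ v) :
    Function.Bijective (Sum.elim ![u, v] ((↑) : ({u, v}ᶜ : Set V) → V)) := by
  refine ⟨Function.Injective.sumElim ?_ Subtype.val_injective ?_, fun x ↦ ?_⟩
  · simp [Function.Injective, Fin.forall_fin_two, huv, huv.symm]
  · rintro i ⟨x, hx⟩ rfl
    fin_cases i <;> simp_all
  · by_cases hx : x ∈ ({u, v} : Set V)
    · rcases hx with rfl | rfl
      exacts [⟨.inl 0, rfl⟩, ⟨.inl 1, rfl⟩]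
    · exact ⟨.inr ⟨x, hx⟩, rfl⟩

theorem Matrix.rank_eq_two_add_rank_submatrix_compl {K V : Type*} [Field K] [Fintype V]
    [DecidableEq V] (A : Matrix V V K) {u v : V} (huv : u ≠ v) (hAuv : A u v ≠ 0)
    (hAvu : A v u ≠ 0) (hrow : ∀ j ≠ v, A u j = 0) (hcol : ∀ i ≠ v, A i u = 0) :
    A.rank = 2 + (A.submatrix (↑) (↑) : Matrix ({u, v}ᶜ : Set V) ({u, v}ᶜ : Set V) K).rank := by
  let e := Equiv.ofBijective _ (Function.bijective_sumElim_pair_compl huv)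
  set B := A.submatrix e e
  set P := B.toBlocks₁₁
  set D := B.toBlocks₂₂
  have hdet : IsUnit P.det := by
    have : P.det = -(A u v * A v u) := by
      simp [P, B, e, det_fin_two, toBlocks₁₁, hrow u huv]
    simpa [this] using mul_ne_zero hAuv hAvu
  have : Invertible P := P.invertibleOfIsUnitDet hdet
  -- `P⁻¹ 1 1 = P 0 0 / det P = A u u / det P`; since row and column `u` vanish off `v`, it is
  -- the only entry of `P⁻¹` that the Schur complement term `C * P⁻¹ * B` involves.
  have hP₁₁ : P⁻¹ 1 1 = 0 := by
    rw [inv_def, adjugate_fin_two]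
    simp [P, B, e, toBlocks₁₁, hrow u huv]
  have hW (w : ({u, v}ᶜ : Set V)) : (w : V) ≠ v := fun h ↦ w.2 (.inr h)
  have hschur : B.toBlocks₂₁ * ⅟P * B.toBlocks₁₂ = 0 := by
    ext w w'
    simp [mul_apply, Fin.sum_univ_two, hP₁₁, B, e, toBlocks₂₁, toBlocks₁₂,
      hcol _ (hW w), hrow _ (hW w')]
  have hB := fromBlocks_eq_of_invertible₁₁ P B.toBlocks₁₂ B.toBlocks₂₁ D
  rw [fromBlocks_toBlocks, hschur, sub_zero] at hB
  calc A.rank = B.rank := (rank_submatrix A e e).symm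
    _ = (fromBlocks P 0 0 D).rank := by
      rw [hB, rank_mul_eq_left_of_isUnit_det _ _ (by simp),
        rank_mul_eq_right_of_isUnit_det _ _ (by simp)]
    _ = 2 + _ := by
      rw [rank_fromBlocks_zero_zero, rank_of_isUnit P ((isUnit_iff_isUnit_det P).2 hdet)]
      rfl

namespace SimpleGraph.Subgraph

variable {V W : Type*} {G : SimpleGraph V} {G' : SimpleGraph W} {M : G.Subgraph}

theorem IsMatching.deleteVerts (hM : M.IsMatching) {t : Set V}
    (ht : ∀ ⦃a b⦄, M.Adj a b → a ∈ t → b ∈ t) : (M.deleteVerts t).IsMatching := by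
  rintro a ⟨ha, hat⟩
  obtain ⟨b, hab, huniq⟩ := hM ha
  refine ⟨b, deleteVerts_adj.2 ⟨ha, hat, M.edge_vert hab.symm, fun hbt ↦ hat (ht hab.symm hbt),
    hab⟩, fun c hc ↦ huniq c (deleteVerts_adj.1 hc).2.2.2.2⟩

theorem IsMatching.deleteVerts_insert_neighborSet (hM : M.IsMatching) (v : V) :
    (M.deleteVerts (insert v (M.neighborSet v))).IsMatching := by
  refine hM.deleteVerts ?_
  rintro a b hab (rfl | hva)
  · exact .inr hab
  · exact .inl (hM.eq_of_adj_left hab hva.symm)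

theorem IsMatching.ncard_edgeSet_le_deleteVerts_insert_neighborSet_add_one [Finite V]
    (hM : M.IsMatching) (v : V) :
    M.edgeSet.ncard ≤ (M.deleteVerts (insert v (M.neighborSet v))).edgeSet.ncard + 1 := by
  set t := insert v (M.neighborSet v)
  have hmeet : ∀ ⦃a b⦄, M.Adj a b → a ∈ t → s(a, b) ∈ (fun w ↦ s(v, w)) '' M.neighborSet v := by
    rintro a b hab (rfl | hva)
    · exact ⟨b, hab, rfl⟩
    · obtain rfl := hM.eq_of_adj_left hab hva.symm
      exact ⟨a, hva, Sym2.eq_swap⟩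
  have hsub : M.edgeSet ⊆ (M.deleteVerts t).edgeSet ∪ (fun w ↦ s(v, w)) '' M.neighborSet v := by
    intro e he
    induction e using Sym2.ind with
    | _ a b =>
      rw [Subgraph.mem_edgeSet] at he
      by_cases ha : a ∈ t
      · exact .inr (hmeet he ha)
      by_cases hb : b ∈ t
      · exact .inr (Sym2.eq_swap ▸ hmeet he.symm hb)
      exact .inl (deleteVerts_adj.2 ⟨M.edge_vert he, ha, M.edge_vert he.symm, hb, he⟩)
  have hnbr : (M.neighborSet v).ncard ≤ 1 :=
    (Set.ncard_le_one_iff).2 fun ha hb ↦ hM.eq_of_adj_left ha hb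
  grw [Set.ncard_le_ncard hsub, Set.ncard_union_le, Set.ncard_image_le, hnbr]

theorem IsMatching.of_map {f : G →g G'} (hf : Function.Injective f)
    (h : (M.map f).IsMatching) : M.IsMatching := by
  intro a ha
  obtain ⟨_, ⟨a', b, hab, ha', rfl⟩, huniq⟩ := h ⟨a, ha, rfl⟩
  obtain rfl : a = a' := (hf ha').symm
  exact ⟨b, hab, fun c hc ↦ hf (huniq _ ⟨a, c, hc, rfl, rfl⟩)⟩

theorem map_comap_eq_of_verts_subset (f : G ↪g G') {M : G'.Subgraph}
    (h : M.verts ⊆ Set.range f) : (M.comap f.toHom).map f.toHom = M := by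
  ext x y
  · exact Set.ext_iff.1 (Set.image_preimage_eq_of_subset h) x
  · constructor
    · rintro ⟨a, b, ⟨-, hab⟩, rfl, rfl⟩
      exact hab
    · intro hxy
      obtain ⟨a, rfl⟩ := h (M.edge_vert hxy)
      obtain ⟨b, rfl⟩ := h (M.edge_vert hxy.symm)
      exact ⟨a, b, ⟨f.map_adj_iff.1 (M.adj_sub hxy), hxy⟩, rfl, rfl⟩

theorem ncard_edgeSet_map {f : G →g G'} (hf : Function.Injective f) (M : G.Subgraph) :
    (M.map f).edgeSet.ncard = M.edgeSet.ncard := by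
  rw [edgeSet_map, Set.ncard_image_of_injective _ (Sym2.map.injective hf)]

end SimpleGraph.Subgraph

section matchNum

open Subgraph

variable {V : Type*} [Fintype V] {G : SimpleGraph V}

theorem bddAbove_matchingSizes (G : SimpleGraph V) :
    BddAbove {n | ∃ M : G.Subgraph, M.IsMatching ∧ M.edgeSet.ncard = n} :=
  ⟨G.edgeSet.ncard, by rintro _ ⟨M, -, rfl⟩; exact Set.ncard_le_ncard M.edgeSet_subset⟩

theorem exists_isMatching_ncard_edgeSet_eq_matchNum (G : SimpleGraph V) :
    ∃ M : G.Subgraph, M.IsMatching ∧ M.edgeSet.ncard = matchNum G :=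
  Nat.sSup_mem (s := {n | ∃ M : G.Subgraph, M.IsMatching ∧ M.edgeSet.ncard = n})
    ⟨0, ⊥, by simp [IsMatching], by simp⟩ (bddAbove_matchingSizes G)

theorem SimpleGraph.Subgraph.IsMatching.ncard_edgeSet_le_matchNum {M : G.Subgraph}
    (hM : M.IsMatching) : M.edgeSet.ncard ≤ matchNum G :=
  le_csSup (bddAbove_matchingSizes G) ⟨M, hM, rfl⟩

theorem SimpleGraph.Subgraph.IsMatching.ncard_edgeSet_le_matchNum_induce {M : G.Subgraph}
    (hM : M.IsMatching) {s : Set V} (hs : M.verts ⊆ s) :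
    M.edgeSet.ncard ≤ matchNum (G.induce s) := by
  set f := (Embedding.induce (G := G) s).toHom
  have hf : Function.Injective f := Subtype.val_injective
  have hmap : (M.comap f).map f = M :=
    map_comap_eq_of_verts_subset _ (hs.trans Subtype.range_coe.superset)
  calc M.edgeSet.ncard = ((M.comap f).map f).edgeSet.ncard := by rw [hmap]
    _ = (M.comap f).edgeSet.ncard := ncard_edgeSet_map hf _
    _ ≤ matchNum (G.induce s) := (IsMatching.of_map hf (by rwa [hmap])).ncard_edgeSet_le_matchNum

theorem matchNum_bot : matchNum (⊥ : SimpleGraph V) = 0 := by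
  obtain ⟨M, -, hM⟩ := exists_isMatching_ncard_edgeSet_eq_matchNum (⊥ : SimpleGraph V)
  rw [← hM, Set.ncard_eq_zero]
  simpa using M.edgeSet_subset

theorem matchNum_induce_compl_pair_add_one_le {u v : V} (huv : G.Adj u v) :
    matchNum (G.induce ({u, v}ᶜ : Set V)) + 1 ≤ matchNum G := by
  obtain ⟨M, hM, hcard⟩ :=
    exists_isMatching_ncard_edgeSet_eq_matchNum (G.induce ({u, v}ᶜ : Set V))
  set f := (Embedding.induce (G := G) ({u, v}ᶜ : Set V)).toHom
  have hf : Function.Injective f := Subtype.val_injective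
  set N := M.map f
  have hN : N.IsMatching := hM.map f hf
  have hNverts : N.verts ⊆ ({u, v}ᶜ : Set V) := by
    rintro _ ⟨x, -, rfl⟩
    exact x.2
  have hdisj : Disjoint N.support (G.subgraphOfAdj huv).support := by
    rw [hN.support_eq_verts, support_subgraphOfAdj]
    exact Set.disjoint_of_subset_left hNverts disjoint_compl_left
  have huvN : s(u, v) ∉ N.edgeSet := fun h ↦ hNverts (N.edge_vert h) (.inl rfl)
  calc matchNum (G.induce _) + 1 = (N ⊔ G.subgraphOfAdj huv).edgeSet.ncard := by
        rw [Subgraph.edgeSet_sup, edgeSet_subgraphOfAdj,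
          Set.ncard_union_eq (Set.disjoint_singleton_right.2 huvN), Set.ncard_singleton,
          ncard_edgeSet_map hf, hcard]
    _ ≤ matchNum G := (hN.sup (.subgraphOfAdj huv) hdisj).ncard_edgeSet_le_matchNum

theorem matchNum_le_matchNum_induce_compl_pair_add_one {u v : V}
    (hu : ∀ w, G.Adj u w → w = v) :
    matchNum G ≤ matchNum (G.induce ({u, v}ᶜ : Set V)) + 1 := by
  obtain ⟨M, hM, hcard⟩ := exists_isMatching_ncard_edgeSet_eq_matchNum G
  have hverts : (M.deleteVerts (insert v (M.neighborSet v))).verts ⊆ ({u, v}ᶜ : Set V) := by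
    rintro x ⟨hx, hxt⟩ (rfl | rfl)
    · obtain ⟨y, hxy, -⟩ := hM hx
      obtain rfl := hu y (M.adj_sub hxy)
      exact hxt (.inr hxy.symm)
    · exact hxt (.inl rfl)
  calc matchNum G = M.edgeSet.ncard := hcard.symm
    _ ≤ (M.deleteVerts (insert v (M.neighborSet v))).edgeSet.ncard + 1 :=
      hM.ncard_edgeSet_le_deleteVerts_insert_neighborSet_add_one v
    _ ≤ matchNum (G.induce ({u, v}ᶜ : Set V)) + 1 := Nat.add_le_add_right
      ((hM.deleteVerts_insert_neighborSet v).ncard_edgeSet_le_matchNum_induce hverts) 1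

theorem matchNum_eq_matchNum_induce_compl_pair_add_one {u v : V} (huv : G.Adj u v)
    (hu : ∀ w, G.Adj u w → w = v) :
    matchNum G = matchNum (G.induce ({u, v}ᶜ : Set V)) + 1 :=
  (matchNum_le_matchNum_induce_compl_pair_add_one hu).antisymm
    (matchNum_induce_compl_pair_add_one_le huv)

end matchNum

theorem SimpleGraph.IsAcyclic.exists_adj_forall_adj_eq {V : Type*} [Finite V]
    {G : SimpleGraph V} (hG : G.IsAcyclic) (hne : G ≠ ⊥) :
    ∃ u v, G.Adj u v ∧ ∀ w, G.Adj u w → w = v := by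
  obtain ⟨x, y, hxy⟩ := ne_bot_iff_exists_adj.1 hne
  have : Nonempty V := ⟨x⟩
  obtain ⟨u, v, p, hp, hmax⟩ := Walk.exists_isPath_forall_isPath_length_le_length G
  have hnil : ¬p.Nil := fun h ↦ by
    simpa [Walk.length_eq_zero_iff.2 h] using hmax _ _ _ (Path.singleton hxy).2
  refine ⟨u, p.snd, p.adj_snd hnil, fun w hw ↦ hG.eq_snd_of_adj_start hp hw ?_⟩
  by_contra hw'
  simpa using hmax _ _ _ (hp.cons (h := hw.symm) hw')

namespace IsSkewRep

variable {V : Type*} [Fintype V] {G : SimpleGraph V} {A : Matrix V V ℝ}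

theorem apply_eq_zero_of_not_adj (hA : IsSkewRep G A) {i j : V} (h : ¬G.Adj i j) :
    A i j = 0 := by
  rcases eq_or_ne i j with rfl | hij
  · have := congrFun (congrFun hA.1 i) i
    simp only [Matrix.transpose_apply, Matrix.neg_apply] at this
    linarith
  · exact not_not.1 fun h' ↦ h ((hA.2 i j hij).1 h')

theorem apply_ne_zero_of_adj (hA : IsSkewRep G A) {i j : V} (h : G.Adj i j) : A i j ≠ 0 :=
  (hA.2 i j h.ne).2 h

theorem eq_zero_of_eq_bot (hA : IsSkewRep G A) (hG : G = ⊥) : A = 0 := by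
  subst hG
  ext i j
  exact hA.apply_eq_zero_of_not_adj id

theorem induce (hA : IsSkewRep G A) (s : Set V) [Fintype s] :
    IsSkewRep (G.induce s) (A.submatrix (↑) (↑)) :=
  ⟨by ext i j; exact congrFun (congrFun hA.1 i) j,
    fun i j hij ↦ hA.2 i j (Subtype.coe_ne_coe.2 hij)⟩

end IsSkewRep

theorem exists_isSkewRep {V : Type*} [Fintype V] (G : SimpleGraph V) :
    ∃ A : Matrix V V ℝ, IsSkewRep G A := by
  obtain ⟨f, hf⟩ : ∃ f : V → ℝ, Function.Injective f :=
    ⟨_, Nat.cast_injective.comp (Fin.val_injective.comp (Fintype.equivFin V).injective)⟩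
  refine ⟨Matrix.of fun i j ↦ if G.Adj i j then f j - f i else 0, ?_, fun i j hij ↦ ?_⟩
  · ext i j
    by_cases h : G.Adj i j <;> simp [h, G.adj_comm j i]
  · by_cases h : G.Adj i j <;> simp [h, sub_eq_zero, hf.ne hij.symm]

theorem IsSkewRep.rank_eq_two_mul_matchNum {V : Type*} [Fintype V] {G : SimpleGraph V}
    (hG : G.IsAcyclic) {A : Matrix V V ℝ} (hA : IsSkewRep G A) :
    A.rank = 2 * matchNum G := by
  induction hn : Nat.card V using Nat.strong_induction_on generalizing V with
  | _ n ih =>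
  rcases eq_or_ne G ⊥ with hbot | hne
  · rw [hA.eq_zero_of_eq_bot hbot, Matrix.rank_zero, hbot, matchNum_bot]
  obtain ⟨u, v, huv, hu⟩ := hG.exists_adj_forall_adj_eq hne
  have hcard : Nat.card ({u, v}ᶜ : Set V) < n := hn ▸ Finite.card_subtype_lt (x := u) (by simp)
  rw [A.rank_eq_two_add_rank_submatrix_compl huv.ne (hA.apply_ne_zero_of_adj huv)
      (hA.apply_ne_zero_of_adj huv.symm)
      (fun j hj ↦ hA.apply_eq_zero_of_not_adj fun h ↦ hj (hu j h))
      (fun i hi ↦ hA.apply_eq_zero_of_not_adj fun h ↦ hi (hu i h.symm)),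
    ih _ hcard (hG.induce _) (hA.induce ({u, v}ᶜ : Set V)) rfl,
    matchNum_eq_matchNum_induce_compl_pair_add_one huv hu]
  ring

/-- For a tree `T`, `mr⁻(T) = 2·match(T) = MR⁻(T)`. -/
theorem minSkewRank_tree {V : Type*} [Fintype V] (T : SimpleGraph V) (hT : T.IsTree) :
    minSkewRank T = 2 * matchNum T ∧ minSkewRank T = maxSkewRank T := by
  have hranks : {r | ∃ A : Matrix V V ℝ, IsSkewRep T A ∧ A.rank = r} = {2 * matchNum T} := by
    refine Set.eq_singleton_iff_unique_mem.2 ⟨?_, ?_⟩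
    · obtain ⟨A, hA⟩ := exists_isSkewRep T
      exact ⟨A, hA, hA.rank_eq_two_mul_matchNum hT.isAcyclic⟩
    · rintro _ ⟨A, hA, rfl⟩
      exact hA.rank_eq_two_mul_matchNum hT.isAcyclic
  simp only [minSkewRank, maxSkewRank, hranks, csInf_singleton, csSup_singleton, and_self]
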